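/- arXiv:2403.15963 — 4 statements merged into one kernel-verified Lean document; each statement's English description precedes it below -/
import Mathlib

section
/- Let θ₁, θ₂ ∈ E, λ₁, λ₂ ∈ ℝ, f₁ ∈ S_st^{λ₁} with 𝔼[f₁(0,·)] = θ₁ and f₂ ∈ S_st^{λ₂} with 𝔼[f₂(0,·)] = θ₂. Set R = max{ R̄^{G_U(θ₁)}, R̄^{G_U(θ₂)} }, where R̄^λ := max{p ≥ 0 : G_L(p) ≤ λ}, and let K_R be the Lipschitz constant from (H3) for this R. Then |λ₁ − λ₂| ≤ K_R |θ₁ − θ₂|. -/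
open MeasureTheory Filter Set

structure HJSetting {Ω : Type} [MeasurableSpace Ω] (P : Measure Ω) (τ : ℝ → Ω → Ω)
    (a : ℝ → Ω → ℝ) (H : ℝ → ℝ → Ω → ℝ) (G_L G_U : ℝ → ℝ) : Prop where
  prob : IsProbabilityMeasure P
  meas_tau : Measurable fun q : ℝ × Ω => τ q.1 q.2
  mp_tau : ∀ x, MeasurePreserving (τ x) P P
  tau_zero : ∀ ω, τ 0 ω = ω
  tau_add : ∀ x y ω, τ (x + y) ω = τ x (τ y ω)
  ergodic : ∀ A : Set Ω, MeasurableSet A → (∀ x, τ x ⁻¹' A = A) → P A = 0 ∨ P A = 1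
  meas_a : Measurable fun q : ℝ × Ω => a q.1 q.2
  a_pos : ∀ x ω, 0 < a x ω
  a_le_one : ∀ x ω, a x ω ≤ 1
  a_stat : ∀ x ω, a x ω = a 0 (τ x ω)
  a_sqrt_lip : ∃ κ > (0:ℝ), ∀ x ω, |Real.sqrt (a x ω) - Real.sqrt (a 0 ω)| ≤ κ * |x|
  meas_H : Measurable fun q : ℝ × ℝ × Ω => H q.1 q.2.1 q.2.2
  H_stat : ∀ p x ω, H p x ω = H p 0 (τ x ω)
  GL_cont : Continuous G_L
  GU_cont : Continuous G_U
  GL_even : ∀ p, G_L (-p) = G_L p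
  GU_even : ∀ p, G_U (-p) = G_U p
  GL_mono : MonotoneOn G_L (Ici 0)
  GU_mono : MonotoneOn G_U (Ici 0)
  GL_coercive : Tendsto G_L atTop atTop
  GU_coercive : Tendsto G_U atTop atTop
  H_lower : ∀ p ω, G_L p ≤ H p 0 ω
  H_upper : ∀ p ω, H p 0 ω ≤ G_U p
  H_lip : ∀ R > (0:ℝ), ∃ K > (0:ℝ), ∀ p q ω, |p| ≤ R → |q| ≤ R →
      |H p 0 ω - H q 0 ω| ≤ K * |p - q|
  H_mod : ∀ R > (0:ℝ), ∃ m : ℝ → ℝ, (∀ r, 0 ≤ m r) ∧ MonotoneOn m (Ici 0) ∧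
      Tendsto m (nhdsWithin 0 (Ioi 0)) (nhds 0) ∧
      ∀ p x ω, |p| ≤ R → |H p x ω - H p 0 ω| ≤ m |x|

/-- `f` is a stationary solution of `a(x,ω) f' + H(f,x,ω) = lam`. -/
def StatSol {Ω : Type} [MeasurableSpace Ω] (P : Measure Ω) (τ : ℝ → Ω → Ω)
    (a : ℝ → Ω → ℝ) (H : ℝ → ℝ → Ω → ℝ) (lam : ℝ) (f : ℝ → Ω → ℝ) : Prop :=
  (Measurable fun q : ℝ × Ω => f q.1 q.2) ∧
  (∀ x ω, f x ω = f 0 (τ x ω)) ∧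
  (∀ ω, ContDiff ℝ 1 fun x => f x ω) ∧
  (∀ᵐ ω ∂P, (∃ M, ∀ x, |f x ω| ≤ M) ∧
    ∀ x, a x ω * deriv (fun y => f y ω) x + H (f x ω) x ω = lam)

/-- The set `E` of expectations `𝔼[f(0,·)]` over all stationary solutions `f`. -/
def Eset {Ω : Type} [MeasurableSpace Ω] (P : Measure Ω) (τ : ℝ → Ω → Ω)
    (a : ℝ → Ω → ℝ) (H : ℝ → ℝ → Ω → ℝ) : Set ℝ :=
  {θ | ∃ lam f, StatSol P τ a H lam f ∧ (∫ ω, f 0 ω ∂P) = θ}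

/-- `R̄^lam = max { p ≥ 0 : G_L p ≤ lam }`. -/
noncomputable def Rbar (G_L : ℝ → ℝ) (lam : ℝ) : ℝ :=
  sSup {p : ℝ | 0 ≤ p ∧ G_L p ≤ lam}

/-!
The key tool is a dichotomy for stationary processes: if a.s. every path of a stationary process
can cross a level `c` only upwards, the set of `ω` whose whole path lies above `c` is invariant,
and ergodicity forces the process to stay a.s. above `c` for all times or a.s. below it. Applied
at both edges of a strip `[α, β]` that the paths cross upwards at a speed at least `ε > 0` (a path
cannot stay in such a strip forever), it shows that the mean of the process is not inside the strip.

For a stationary solution `f`, boundedness of the paths and `G_L ≤ H` force `G_L (f) ≤ λ`, hence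
`|f| ≤ R̄^λ`. If `λ > G_U θ`, then `a f' = λ - H(f) ≥ λ - G_U(f)` is bounded below near `θ`, so
`θ = 𝔼 f` cannot lie in a strip around `θ`: thus `λ ≤ G_U θ` and `|f| ≤ R̄^{G_U θ}`. Finally the
difference `d = f₁ - f₂` satisfies `a d' ≥ λ₁ - λ₂ - K |d|`, so it crosses every strip `[-η, η]`
with `K η < λ₁ - λ₂` upwards, whence `η ≤ |θ₁ - θ₂|`.
-/

theorem le_of_le_mul_of_le_one {a v δ : ℝ} (ha : 0 < a) (ha₁ : a ≤ 1) (hδ : 0 < δ)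
    (h : δ ≤ a * v) : δ ≤ v := by
  nlinarith

theorem le_apply_of_deriv_pos_on_level {g : ℝ → ℝ} (hg : Differentiable ℝ g) {c x y : ℝ}
    (hc : ∀ t, g t = c → 0 < deriv g t) (hxy : x ≤ y) (hx : c ≤ g x) : c ≤ g y := by
  have := image_le_of_deriv_right_lt_deriv_boundary (f := fun t => -g t) (B := fun _ => -c)
    (hg.neg.continuous.continuousOn) (fun t _ => (hg t).hasDerivAt.neg.hasDerivWithinAt)
    (by simpa using hx) (fun _ => hasDerivAt_const _ _)
    (fun t _ ht => by simpa using hc t (by simpa using ht)) ⟨hxy, le_rfl⟩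
  simpa using this

theorem not_bddAbove_range_of_le_deriv {g : ℝ → ℝ} (hg : Differentiable ℝ g) {α δ x₀ : ℝ}
    (hδ : 0 < δ) (hx₀ : α ≤ g x₀) (hderiv : ∀ t, α ≤ g t → δ ≤ deriv g t) :
    ¬ BddAbove (range g) := by
  have hinv : ∀ t, x₀ ≤ t → α ≤ g t := fun t ht =>
    le_apply_of_deriv_pos_on_level hg (fun s hs => hδ.trans_le (hderiv s hs.ge)) ht hx₀
  have hgrowth : ∀ t, x₀ ≤ t → δ * (t - x₀) ≤ g t - g x₀ := fun t ht =>
    (convex_Ici x₀).mul_sub_le_image_sub_of_le_deriv hg.continuous.continuousOn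
      hg.differentiableOn (fun s hs => hderiv s (hinv s (interior_Ici (a := x₀) ▸ hs).le))
      x₀ self_mem_Ici t ht ht
  rintro ⟨M, hM⟩
  set t := x₀ + |M - g x₀ + 1| / δ
  have hgt := hgrowth t (le_add_of_nonneg_right (by positivity))
  have hMt := hM (mem_range_self t)
  rw [show δ * (t - x₀) = |M - g x₀ + 1| by simp only [t, add_sub_cancel_left]; field_simp] at hgt
  linarith [le_abs_self (M - g x₀ + 1)]

theorem le_of_bounded_of_mul_deriv_le_sub {G g a : ℝ → ℝ} {lam M : ℝ}
    (hGeven : ∀ p, G (-p) = G p) (hGmono : MonotoneOn G (Ici 0)) (hg : Differentiable ℝ g)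
    (hM : ∀ t, |g t| ≤ M)
    (ha : ∀ t, 0 < a t) (ha₁ : ∀ t, a t ≤ 1) (hode : ∀ t, a t * deriv g t ≤ lam - G (g t))
    (x : ℝ) : G (g x) ≤ lam := by
  by_contra! hx
  have hGabs : ∀ p, G |p| = G p := fun p => by
    rcases abs_choice p with h | h <;> simp [h, hGeven]
  set δ := G (g x) - lam
  have hδ : 0 < δ := sub_pos.2 hx
  -- above the level `|g x|` the solution is pushed towards zero at speed at least `δ`
  have hdecr : ∀ t, |g x| ≤ |g t| → δ ≤ -deriv g t := fun t ht => by
    have hG : G (g x) ≤ G (g t) := by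
      simpa only [hGabs] using hGmono (mem_Ici.2 (abs_nonneg _)) (mem_Ici.2 (abs_nonneg _)) ht
    exact le_of_le_mul_of_le_one (ha t) (ha₁ t) hδ (by linarith [hode t])
  have hbdd : ∀ u : ℝ → ℝ, (∀ t, ∃ s, u t ≤ |g s|) → BddAbove (range u) := fun u hu =>
    ⟨M, by rintro _ ⟨t, rfl⟩; obtain ⟨s, hs⟩ := hu t; exact hs.trans (hM s)⟩
  rcases le_or_gt 0 (g x) with hpos | hneg
  · refine not_bddAbove_range_of_le_deriv (g := fun t => g (-t)) (hg.comp differentiable_neg)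
      hδ (x₀ := -x) (α := |g x|) (by simp [abs_of_nonneg hpos]) (fun t ht => ?_)
      (hbdd _ fun t => ⟨-t, le_abs_self _⟩)
    rw [deriv_comp_neg]
    exact hdecr (-t) (ht.trans (le_abs_self _))
  · refine not_bddAbove_range_of_le_deriv (g := -g) hg.neg hδ (x₀ := x)
      (α := |g x|) (by simp [abs_of_neg hneg]) (fun t ht => ?_)
      (hbdd _ fun t => ⟨t, neg_le_abs _⟩)
    rw [deriv.neg]
    exact hdecr t (ht.trans (neg_le_abs _))

theorem abs_le_Rbar {G : ℝ → ℝ} (hGeven : ∀ p, G (-p) = G p) (hG : Tendsto G atTop atTop)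
    {p μ : ℝ} (hp : G p ≤ μ) : |p| ≤ Rbar G μ := by
  obtain ⟨N, hN⟩ := eventually_atTop.1 (hG.eventually_gt_atTop μ)
  refine le_csSup ⟨N, fun q hq => le_of_not_ge fun hNq => (hN q hNq).not_ge hq.2⟩
    ⟨abs_nonneg p, ?_⟩
  rcases abs_choice p with h | h <;> simpa [h, hGeven] using hp

structure IsErgodicFlow {Ω : Type*} [MeasurableSpace Ω] (τ : ℝ → Ω → Ω) (P : Measure Ω) :
    Prop where
  measurePreserving : ∀ x, MeasurePreserving (τ x) P P
  map_add : ∀ x y ω, τ (x + y) ω = τ x (τ y ω)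
  ergodic : ∀ A : Set Ω, MeasurableSet A → (∀ x, τ x ⁻¹' A = A) → P A = 0 ∨ P A = 1

namespace IsErgodicFlow

variable {Ω : Type*} [MeasurableSpace Ω] {P : Measure Ω} [IsProbabilityMeasure P]
  {τ : ℝ → Ω → Ω} {F : ℝ → Ω → ℝ}

theorem ae_forall_le_or_ae_forall_ge (hτ : IsErgodicFlow τ P) (hFm : Measurable (F 0))
    (hFs : ∀ x ω, F x ω = F 0 (τ x ω)) (hFc : ∀ ω, Continuous fun x => F x ω) {c : ℝ}
    (hup : ∀ᵐ ω ∂P, ∀ x y, x ≤ y → c ≤ F x ω → c ≤ F y ω) :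
    (∀ᵐ ω ∂P, ∀ x, c ≤ F x ω) ∨ (∀ᵐ ω ∂P, ∀ x, F x ω ≤ c) := by
  have hFxm : ∀ x, Measurable (F x) := fun x =>
    (funext (hFs x) : F x = F 0 ∘ τ x) ▸ hFm.comp (hτ.measurePreserving x).measurable
  set A := {ω | c ≤ F 0 ω}
  have hAm : MeasurableSet A := measurableSet_le measurable_const hFm
  -- by stationarity all the sets `{c ≤ F x}` have the measure of `A`; monotonicity in `x`
  -- then makes them a.e. equal to `A`
  have hlevel : ∀ x, ∀ᵐ ω ∂P, (c ≤ F x ω ↔ c ≤ F 0 ω) := fun x => by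
    have hpre : τ x ⁻¹' A = {ω | c ≤ F x ω} := by ext ω; simp [A, hFs x ω]
    have hmeas : P {ω | c ≤ F x ω} = P A := by
      rw [← hpre, (hτ.measurePreserving x).measure_preimage hAm.nullMeasurableSet]
    have hxm : MeasurableSet {ω | c ≤ F x ω} := measurableSet_le measurable_const (hFxm x)
    rcases le_total 0 x with hx | hx
    · refine (ae_eq_of_ae_subset_of_measure_ge ?_ hmeas.le hAm.nullMeasurableSet
        (measure_ne_top _ _)).mem_iff.mono fun ω h => h.symm
      filter_upwards [hup] with ω h using h 0 x hx
    · refine (ae_eq_of_ae_subset_of_measure_ge ?_ hmeas.ge hxm.nullMeasurableSet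
        (measure_ne_top _ _)).mem_iff
      filter_upwards [hup] with ω h using h x 0 hx
  have hrat : ∀ᵐ ω ∂P, ∀ q : ℚ, (c ≤ F q ω ↔ c ≤ F 0 ω) := ae_all_iff.2 fun q => hlevel q
  set B := {ω | ∀ x, c ≤ F x ω}
  have hB : ∀ ω, ω ∈ B ↔ ∀ q : ℚ, c ≤ F q ω := fun ω =>
    ⟨fun h q => h q, fun h x =>
      Rat.denseRange_cast.induction_on x (isClosed_le continuous_const (hFc ω)) h⟩
  have hBm : MeasurableSet B := by
    rw [show B = ⋂ q : ℚ, {ω | c ≤ F q ω} from ext fun ω => by simp [hB ω]]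
    exact MeasurableSet.iInter fun q => measurableSet_le measurable_const (hFxm q)
  have hBinv : ∀ z, τ z ⁻¹' B = B := fun z => by
    ext ω
    simp only [B, mem_preimage, mem_ofPred_eq, hFs _ (τ z ω), ← hτ.map_add, ← hFs]
    exact ⟨fun h x => by simpa using h (x - z), fun h x => h (x + z)⟩
  rcases hτ.ergodic B hBm hBinv with h0 | h1
  · right
    filter_upwards [measure_eq_zero_iff_ae_notMem.1 h0, hrat] with ω hωB hω x
    have hlt : ∀ q : ℚ, F q ω < c := fun q => lt_of_not_ge fun hq =>
      hωB ((hB ω).2 fun r => (hω r).2 ((hω q).1 hq))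
    exact Rat.denseRange_cast.induction_on x (isClosed_le (hFc ω) continuous_const)
      fun q => (hlt q).le
  · left
    exact (ae_iff_measure_eq hBm.nullMeasurableSet).2 (by rw [h1, measure_univ])

theorem le_integral_or_integral_le (hτ : IsErgodicFlow τ P) (hFm : Measurable (F 0))
    (hFs : ∀ x ω, F x ω = F 0 (τ x ω)) (hFd : ∀ ω, Differentiable ℝ fun x => F x ω)
    (hint : Integrable (F 0) P) {α β ε : ℝ} (hε : 0 < ε)
    (hstrip : ∀ᵐ ω ∂P, ∀ t, F t ω ∈ Icc α β → ε ≤ deriv (fun x => F x ω) t) :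
    β ≤ ∫ ω, F 0 ω ∂P ∨ ∫ ω, F 0 ω ∂P ≤ α := by
  rcases lt_or_ge β α with hβα | hαβ
  · exact (le_or_gt β _).imp_right fun h => (h.trans hβα).le
  have hdich : ∀ c ∈ Icc α β,
      (∀ᵐ ω ∂P, ∀ x, c ≤ F x ω) ∨ (∀ᵐ ω ∂P, ∀ x, F x ω ≤ c) := fun c hc =>
    hτ.ae_forall_le_or_ae_forall_ge hFm hFs (fun ω => (hFd ω).continuous) <| by
      filter_upwards [hstrip] with ω hω x y hxy hx
      exact le_apply_of_deriv_pos_on_level (hFd ω)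
        (fun t ht => hε.trans_le (hω t (ht ▸ hc))) hxy hx
  rcases hdich β ⟨hαβ, le_rfl⟩ with hge | hle
  · left
    simpa using integral_mono_ae (integrable_const β) hint (hge.mono fun ω h => h 0)
  rcases hdich α ⟨le_rfl, hαβ⟩ with hge | hle'
  · obtain ⟨ω, hωs, hωβ, hωα⟩ := (hstrip.and (hle.and hge)).exists
    exact absurd ⟨β, forall_mem_range.2 hωβ⟩ <| not_bddAbove_range_of_le_deriv (hFd ω) hε
      (hωα 0) fun t ht => hωs t ⟨ht, hωβ t⟩
  · right
    simpa using integral_mono_ae hint (integrable_const α) (hle'.mono fun ω h => h 0)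

end IsErgodicFlow

section HJ

variable {Ω : Type} [MeasurableSpace Ω] {P : Measure Ω} {τ : ℝ → Ω → Ω}
  {a : ℝ → Ω → ℝ} {H : ℝ → ℝ → Ω → ℝ} {G_L G_U : ℝ → ℝ}

theorem HJSetting.isErgodicFlow (hset : HJSetting P τ a H G_L G_U) : IsErgodicFlow τ P :=
  ⟨hset.mp_tau, hset.tau_add, hset.ergodic⟩

namespace StatSol

variable {lam : ℝ} {f : ℝ → Ω → ℝ}

theorem measurable (hf : StatSol P τ a H lam f) (x : ℝ) : Measurable (f x) :=
  hf.1.comp measurable_prodMk_left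

theorem differentiable (hf : StatSol P τ a H lam f) (ω : Ω) :
    Differentiable ℝ fun x => f x ω :=
  (hf.2.2.1 ω).differentiable one_ne_zero

theorem stationary (hf : StatSol P τ a H lam f) (x : ℝ) (ω : Ω) : f x ω = f 0 (τ x ω) :=
  hf.2.1 x ω

theorem ae_ode (hf : StatSol P τ a H lam f) :
    ∀ᵐ ω ∂P, ∀ x, a x ω * deriv (fun y => f y ω) x + H (f x ω) x ω = lam :=
  hf.2.2.2.mono fun _ h => h.2

theorem ae_GL_le (hset : HJSetting P τ a H G_L G_U) (hf : StatSol P τ a H lam f) :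
    ∀ᵐ ω ∂P, ∀ x, G_L (f x ω) ≤ lam := by
  filter_upwards [hf.2.2.2] with ω ⟨⟨M, hM⟩, hode⟩
  refine le_of_bounded_of_mul_deriv_le_sub hset.GL_even hset.GL_mono (hf.differentiable ω) hM
    (hset.a_pos · ω) (hset.a_le_one · ω) fun t => ?_
  have hH := hset.H_lower (f t ω) (τ t ω)
  rw [← hset.H_stat] at hH
  linarith [hode t]

theorem ae_abs_le_Rbar (hset : HJSetting P τ a H G_L G_U) (hf : StatSol P τ a H lam f)
    {μ : ℝ} (hμ : lam ≤ μ) : ∀ᵐ ω ∂P, ∀ x, |f x ω| ≤ Rbar G_L μ := by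
  filter_upwards [hf.ae_GL_le hset] with ω hω x
  exact abs_le_Rbar hset.GL_even hset.GL_coercive ((hω x).trans hμ)

theorem integrable (hset : HJSetting P τ a H G_L G_U) (hf : StatSol P τ a H lam f) :
    Integrable (f 0) P :=
  have := hset.prob
  .of_bound (hf.measurable 0).aestronglyMeasurable (Rbar G_L lam)
    ((hf.ae_abs_le_Rbar hset le_rfl).mono fun _ h => h 0)

theorem le_GU_integral (hset : HJSetting P τ a H G_L G_U) (hf : StatSol P τ a H lam f) :
    lam ≤ G_U (∫ ω, f 0 ω ∂P) := by
  have := hset.prob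
  set θ := ∫ ω, f 0 ω ∂P
  by_contra! hlt
  obtain ⟨η, hη, hGU⟩ : ∃ η > 0, ∀ p ∈ Metric.closedBall θ η, G_U p < (G_U θ + lam) / 2 :=
    Metric.nhds_basis_closedBall.eventually_iff.1 <|
      hset.GU_cont.continuousAt.eventually_lt continuousAt_const (by linarith)
  have hstrip := hset.isErgodicFlow.le_integral_or_integral_le (hf.measurable 0) hf.stationary
    hf.differentiable (hf.integrable hset) (α := θ - η) (β := θ + η)
    (ε := (lam - G_U θ) / 2) (by linarith) <| by
      filter_upwards [hf.ae_ode] with ω hode t ht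
      have hH := hset.H_upper (f t ω) (τ t ω)
      rw [← hset.H_stat] at hH
      have hGUt := hGU _ (Real.closedBall_eq_Icc ▸ ht)
      exact le_of_le_mul_of_le_one (hset.a_pos t ω) (hset.a_le_one t ω) (by linarith)
        (by linarith [hode t])
  rcases hstrip with h | h <;> linarith

theorem sub_le_mul_abs_integral_sub (hset : HJSetting P τ a H G_L G_U)
    {lam₁ lam₂ R K : ℝ} {f₁ f₂ : ℝ → Ω → ℝ}
    (hf₁ : StatSol P τ a H lam₁ f₁) (hf₂ : StatSol P τ a H lam₂ f₂)
    (hb₁ : ∀ᵐ ω ∂P, ∀ x, |f₁ x ω| ≤ R) (hb₂ : ∀ᵐ ω ∂P, ∀ x, |f₂ x ω| ≤ R) (hK : 0 < K)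
    (hKlip : ∀ p q ω, |p| ≤ R → |q| ≤ R → |H p 0 ω - H q 0 ω| ≤ K * |p - q|) :
    lam₁ - lam₂ ≤ K * |∫ ω, f₁ 0 ω ∂P - ∫ ω, f₂ 0 ω ∂P| := by
  have := hset.prob
  rw [← div_le_iff₀' hK]
  refine le_of_forall_lt_imp_le_of_dense fun η hη => ?_
  rw [lt_div_iff₀' hK] at hη
  have hstrip := hset.isErgodicFlow.le_integral_or_integral_le (F := fun x ω => f₁ x ω - f₂ x ω)
    ((hf₁.measurable 0).sub (hf₂.measurable 0)) (fun x ω => by rw [hf₁.stationary, hf₂.stationary])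
    (fun ω => (hf₁.differentiable ω).sub (hf₂.differentiable ω))
    ((hf₁.integrable hset).sub (hf₂.integrable hset)) (α := -η) (β := η)
    (ε := lam₁ - lam₂ - K * η) (by linarith) <| by
      filter_upwards [hf₁.ae_ode, hf₂.ae_ode, hb₁, hb₂] with ω hode₁ hode₂ hb₁ hb₂ t ht
      have hH : |H (f₁ t ω) t ω - H (f₂ t ω) t ω| ≤ K * η := by
        rw [hset.H_stat (f₁ t ω), hset.H_stat (f₂ t ω)]
        exact (hKlip _ _ _ (hb₁ t) (hb₂ t)).trans
          (mul_le_mul_of_nonneg_left (abs_le.2 ht) hK.le)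
      refine le_of_le_mul_of_le_one (hset.a_pos t ω) (hset.a_le_one t ω) (by linarith) ?_
      rw [deriv_fun_sub (hf₁.differentiable ω t) (hf₂.differentiable ω t), mul_sub]
      linarith [hode₁ t, hode₂ t, (abs_le.1 hH).2]
  rw [integral_sub (hf₁.integrable hset) (hf₂.integrable hset)] at hstrip
  rcases hstrip with h | h
  · exact h.trans (le_abs_self _)
  · exact le_abs.2 (Or.inr (by linarith))

end StatSol

end HJ

theorem lambda_lipschitz_in_theta
    {Ω : Type} [MeasurableSpace Ω] (P : Measure Ω) (τ : ℝ → Ω → Ω)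
    (a : ℝ → Ω → ℝ) (H : ℝ → ℝ → Ω → ℝ) (G_L G_U : ℝ → ℝ)
    (hset : HJSetting P τ a H G_L G_U)
    (θ₁ θ₂ lam₁ lam₂ : ℝ) (f₁ f₂ : ℝ → Ω → ℝ)
    (hf₁ : StatSol P τ a H lam₁ f₁) (hf₂ : StatSol P τ a H lam₂ f₂)
    (hmean₁ : (∫ ω, f₁ 0 ω ∂P) = θ₁) (hmean₂ : (∫ ω, f₂ 0 ω ∂P) = θ₂)
    (K : ℝ) (hK : 0 < K)
    (hKlip : ∀ p q ω, |p| ≤ max (Rbar G_L (G_U θ₁)) (Rbar G_L (G_U θ₂)) →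
      |q| ≤ max (Rbar G_L (G_U θ₁)) (Rbar G_L (G_U θ₂)) →
      |H p 0 ω - H q 0 ω| ≤ K * |p - q|) :
    |lam₁ - lam₂| ≤ K * |θ₁ - θ₂| := by
  set R := max (Rbar G_L (G_U θ₁)) (Rbar G_L (G_U θ₂))
  have hb₁ : ∀ᵐ ω ∂P, ∀ x, |f₁ x ω| ≤ R :=
    (hf₁.ae_abs_le_Rbar hset (hmean₁ ▸ hf₁.le_GU_integral hset)).mono
      fun _ h x => (h x).trans (le_max_left _ _)
  have hb₂ : ∀ᵐ ω ∂P, ∀ x, |f₂ x ω| ≤ R :=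
    (hf₂.ae_abs_le_Rbar hset (hmean₂ ▸ hf₂.le_GU_integral hset)).mono
      fun _ h x => (h x).trans (le_max_right _ _)
  have h₁₂ := hf₁.sub_le_mul_abs_integral_sub hset hf₂ hb₁ hb₂ hK hKlip
  have h₂₁ := hf₂.sub_le_mul_abs_integral_sub hset hf₁ hb₂ hb₁ hK hKlip
  rw [hmean₁, hmean₂] at h₁₂ h₂₁
  rw [abs_sub_comm] at h₂₁
  exact abs_sub_le_iff.2 ⟨h₁₂, h₂₁⟩
end

section
/- (Glued supersolution.) Let λ̄ ∈ ℝ, δ > 0 and z₁ < z₂. Suppose f₁, f₂ : ℝ → ℝ are bounded C¹ functions satisfying a(x)f_i′(x) + H(f_i(x),x) = λ̄ for all x ∈ ℝ (i = 1,2), and g is C¹ on [z₁,z₂] with a(x)g′(x) + H(g(x),x) = λ̄ + δ for all x ∈ [z₁,z₂], g(z₁) = f₁(z₁) and g(z₂) = f₂(z₂). Define F : ℝ → ℝ by F(x) = ∫_{z₁}^x f₁(y)dy for x ≤ z₁, F(x) = ∫_{z₁}^x g(y)dy for z₁ < x < z₂, and F(x) = ∫_{z₁}^{z₂} g(y)dy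 + ∫_{z₂}^x f₂(y)dy for x ≥ z₂. Then F is C¹ and Lipschitz on ℝ, and w(t,x) := t(λ̄ + δ) + F(x) is a viscosity supersolution of ∂_t u = a(x) ∂²_{xx} u + H(∂_x u, x) on (0,∞) × ℝ. -/
open MeasureTheory Filter Set

def IsViscositySubsolution (alpha : ℝ → ℝ) (h : ℝ → ℝ → ℝ) (v : ℝ → ℝ → ℝ) : Prop :=
  ∀ t₀ x₀ : ℝ, 0 < t₀ →
    ∀ φ : ℝ × ℝ → ℝ, ContDiffOn ℝ 2 φ {q : ℝ × ℝ | 0 < q.1} →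
      IsLocalMax (fun q : ℝ × ℝ => v q.1 q.2 - φ q) (t₀, x₀) →
      deriv (fun t => φ (t, x₀)) t₀ ≤
        alpha x₀ * deriv (deriv fun x => φ (t₀, x)) x₀ +
          h (deriv (fun x => φ (t₀, x)) x₀) x₀

def IsViscositySupersolution (alpha : ℝ → ℝ) (h : ℝ → ℝ → ℝ) (v : ℝ → ℝ → ℝ) : Prop :=
  ∀ t₀ x₀ : ℝ, 0 < t₀ →
    ∀ φ : ℝ × ℝ → ℝ, ContDiffOn ℝ 2 φ {q : ℝ × ℝ | 0 < q.1} →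
      IsLocalMin (fun q : ℝ × ℝ => v q.1 q.2 - φ q) (t₀, x₀) →
      alpha x₀ * deriv (deriv fun x => φ (t₀, x)) x₀ +
          h (deriv (fun x => φ (t₀, x)) x₀) x₀ ≤
        deriv (fun t => φ (t, x₀)) t₀

def IsViscositySolution (alpha : ℝ → ℝ) (h : ℝ → ℝ → ℝ) (v : ℝ → ℝ → ℝ) : Prop :=
  IsViscositySubsolution alpha h v ∧ IsViscositySupersolution alpha h v

/-!
`F` is a primitive of the continuous bounded function `G` obtained by gluing `f₁`, `g` and `f₂`,
hence `C¹` and Lipschitz. If `w - φ` has a local minimum at `(t₀, x₀)`, then `∂ₜφ = λ̄ + δ` and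
`∂ₓφ = G x₀`. Although `G` need not be differentiable at `z₁, z₂`, it has a right derivative `R`
everywhere (that of `g` at `z₁`, of `f₂` at `z₂`), and at a minimum this one-sided information
suffices: `∂ₓₓφ ≤ R`, since otherwise `F - φ(t₀, ·)` would decrease strictly just right of `x₀`.
The equations for `f₁, g, f₂` bound `a R + H (G x₀) x₀` by `λ̄ + δ`, and `a ≥ 0` concludes.
-/

open Topology

lemma exists_continuous_eqOn_Iic_Icc_Ici {α β : Type*} [LinearOrder α] [TopologicalSpace α]
    [OrderTopology α] [TopologicalSpace β] {a b : α} (hab : a ≤ b) {f₁ g f₂ : α → β}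
    (hf₁ : Continuous f₁) (hg : ContinuousOn g (Icc a b)) (hf₂ : Continuous f₂)
    (ha : g a = f₁ a) (hb : g b = f₂ b) :
    ∃ G : α → β, Continuous G ∧ EqOn G f₁ (Iic a) ∧ EqOn G g (Icc a b) ∧ EqOn G f₂ (Ici b) := by
  set e := IccExtend hab ((Icc a b).domRestrict g)
  have he : Continuous e := (continuousOn_iff_continuous_domRestrict.mp hg).Icc_extend'
  have heg : EqOn e g (Icc a b) := fun x hx => IccExtend_of_mem hab _ hx
  refine ⟨fun x => if x ≤ a then f₁ x else if x ≤ b then e x else f₂ x, ?_, ?_, ?_, ?_⟩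
  · refine hf₁.if_le (he.if_le hf₂ continuous_id continuous_const ?_) continuous_id
      continuous_const ?_
    · rintro x rfl
      rw [heg ⟨hab, le_rfl⟩, hb]
    · rintro x rfl
      rw [if_pos hab, heg ⟨le_rfl, hab⟩, ha]
  · intro x hx
    simp only [if_pos (show x ≤ a from hx)]
  · rintro x ⟨hax, hxb⟩
    rcases hax.eq_or_lt with rfl | hax
    · simp [ha]
    · simp [not_le.mpr hax, hxb, heg ⟨hax.le, hxb⟩]
  · intro x (hbx : b ≤ x)
    rcases hbx.eq_or_lt with rfl | hbx
    · simp only [le_rfl, if_true]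
      split_ifs with hba
      · obtain rfl := hab.antisymm hba
        rw [← ha, hb]
      · rw [heg ⟨hab, le_rfl⟩, hb]
    · simp [not_le.mpr (hab.trans_lt hbx), not_le.mpr hbx]

section Primitive

variable {E : Type*} [NormedAddCommGroup E] [NormedSpace ℝ E]

lemma intervalIntegral_eq_ite_of_eqOn_Iic_Icc_Ici {a b : ℝ} (hab : a ≤ b)
    {f₁ g f₂ G : ℝ → E} (hG : Continuous G) (h₁ : EqOn G f₁ (Iic a)) (hg : EqOn G g (Icc a b))
    (h₂ : EqOn G f₂ (Ici b)) (x : ℝ) :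
    ∫ y in a..x, G y =
      if x ≤ a then ∫ y in a..x, f₁ y
      else if x < b then ∫ y in a..x, g y
      else (∫ y in a..b, g y) + ∫ y in b..x, f₂ y := by
  split_ifs with hxa hxb
  · exact intervalIntegral.integral_congr fun y hy => h₁ (by rw [uIcc_of_ge hxa] at hy; exact hy.2)
  · refine intervalIntegral.integral_congr fun y hy => hg ?_
    rw [uIcc_of_le (not_le.mp hxa).le] at hy
    exact ⟨hy.1, hy.2.trans hxb.le⟩
  · rw [← intervalIntegral.integral_add_adjacent_intervals (hG.intervalIntegrable a b)
      (hG.intervalIntegrable b x)]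
    congr 1
    · exact intervalIntegral.integral_congr fun y hy => hg (by rwa [uIcc_of_le hab] at hy)
    · refine intervalIntegral.integral_congr fun y hy => h₂ ?_
      rw [uIcc_of_le (not_lt.mp hxb)] at hy
      exact hy.1

lemma Continuous.contDiff_one_primitive [CompleteSpace E] {G : ℝ → E} (hG : Continuous G)
    (a : ℝ) : ContDiff ℝ 1 fun x => ∫ y in a..x, G y := by
  refine contDiff_one_iff_deriv.mpr
    ⟨fun x => (hG.integral_hasStrictDerivAt a x).hasDerivAt.differentiableAt, ?_⟩
  rwa [funext (hG.deriv_integral G a)]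

lemma lipschitzWith_primitive {G : ℝ → E} {C : ℝ} (hG : Continuous G) (hC : ∀ x, ‖G x‖ ≤ C)
    (a : ℝ) : LipschitzWith (Real.toNNReal C) fun x => ∫ y in a..x, G y := by
  refine LipschitzWith.of_dist_le' fun x y => ?_
  rw [dist_eq_norm, intervalIntegral.integral_interval_sub_left (hG.intervalIntegrable a x)
    (hG.intervalIntegrable a y), Real.dist_eq]
  exact intervalIntegral.norm_integral_le_of_norm_le_const fun z _ => hC z

end Primitive

lemma Continuous.exists_norm_le_of_eqOn_Iic_Ici {E : Type*} [SeminormedAddGroup E]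
    {a b : ℝ} {G f₁ f₂ : ℝ → E} (hG : Continuous G)
    (h₁ : EqOn G f₁ (Iic a)) (h₂ : EqOn G f₂ (Ici b))
    (hf₁ : ∃ M, ∀ x, ‖f₁ x‖ ≤ M) (hf₂ : ∃ M, ∀ x, ‖f₂ x‖ ≤ M) : ∃ C, ∀ x, ‖G x‖ ≤ C := by
  obtain ⟨M₁, hM₁⟩ := hf₁
  obtain ⟨M₂, hM₂⟩ := hf₂
  obtain ⟨M, hM⟩ := isCompact_Icc.exists_bound_of_continuousOn (hG.continuousOn (s := Icc a b))
  refine ⟨max M₁ (max M M₂), fun x => ?_⟩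
  rcases le_or_gt x a with hxa | hax
  · exact h₁ hxa ▸ (hM₁ x).trans (le_max_left _ _)
  rcases le_or_gt b x with hbx | hxb
  · exact h₂ hbx ▸ (hM₂ x).trans (le_max_of_le_right (le_max_right _ _))
  · exact (hM x ⟨hax.le, hxb.le⟩).trans (le_max_of_le_right (le_max_left _ _))

lemma IsLocalMin.nonneg_of_hasDerivWithinAt_Ici {ψ ψ' : ℝ → ℝ} {x₀ D : ℝ}
    (hmin : IsLocalMin ψ x₀) (hψ : ∀ᶠ x in 𝓝 x₀, HasDerivAt ψ (ψ' x) x)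
    (hD : HasDerivWithinAt ψ' D (Ici x₀) x₀) : 0 ≤ D := by
  by_contra! hD0
  have h0 : ψ' x₀ = 0 := hmin.hasDerivAt_eq_zero hψ.self_of_nhds
  have hneg : ∀ᶠ x in 𝓝[>] x₀, ψ' x < 0 := by
    have hslope := hasDerivWithinAt_iff_tendsto_slope.mp hD
    rw [Ici_sdiff_left] at hslope
    filter_upwards [hslope.eventually_lt_const hD0, self_mem_nhdsWithin] with x hx (hx₀ : x₀ < x)
    rwa [slope_def_field, h0, sub_zero, div_lt_iff₀ (sub_pos.mpr hx₀), zero_mul] at hx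
  obtain ⟨u, hx₀u, hu⟩ := mem_nhdsGT_iff_exists_Ioc_subset.mp
    (hneg.and ((hψ.and hmin).filter_mono nhdsWithin_le_nhds))
  have hderiv : ∀ x ∈ Icc x₀ u, HasDerivAt ψ (ψ' x) x := by
    rintro x ⟨hx₀x, hxu⟩
    rcases hx₀x.eq_or_lt with rfl | hx₀x
    · exact hψ.self_of_nhds
    · exact (hu ⟨hx₀x, hxu⟩).2.1
  have hanti : StrictAntiOn ψ (Icc x₀ u) := by
    refine strictAntiOn_of_hasDerivWithinAt_neg (f' := ψ') (convex_Icc _ _)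
      (fun x hx => (hderiv x hx).continuousAt.continuousWithinAt)
      (fun x hx => (hderiv x (interior_subset hx)).hasDerivWithinAt) fun x hx => ?_
    rw [interior_Icc] at hx
    exact (hu (Ioo_subset_Ioc_self hx)).1
  exact (hanti (left_mem_Icc.mpr hx₀u.le) (right_mem_Icc.mpr hx₀u.le) hx₀u).not_ge
    (hu ⟨hx₀u, le_rfl⟩).2.2

lemma IsLocalMin.deriv_eq_and_deriv_deriv_le_of_sub {F G φ : ℝ → ℝ} {x₀ R : ℝ}
    (hF : ∀ x, HasDerivAt F (G x) x) (hφ : ContDiffAt ℝ 2 φ x₀)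
    (hmin : IsLocalMin (fun x => F x - φ x) x₀) (hR : HasDerivWithinAt G R (Ici x₀) x₀) :
    deriv φ x₀ = G x₀ ∧ deriv (deriv φ) x₀ ≤ R := by
  have hψ : ∀ᶠ x in 𝓝 x₀, HasDerivAt (fun x => F x - φ x) (G x - deriv φ x) x := by
    filter_upwards [hφ.eventually (by simp)] with x hx
    exact (hF x).sub (hx.differentiableAt two_ne_zero).hasDerivAt
  have hφ'' : HasDerivAt (deriv φ) (deriv (deriv φ) x₀) x₀ :=
    ((hφ.derivWithin (m := 1) le_rfl).differentiableAt one_ne_zero).hasDerivAt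
  refine ⟨(sub_eq_zero.mp (hmin.hasDerivAt_eq_zero hψ.self_of_nhds)).symm, ?_⟩
  exact sub_nonneg.mp (hmin.nonneg_of_hasDerivWithinAt_Ici hψ (hR.sub hφ''.hasDerivWithinAt))

lemma isViscositySupersolution_add_of_hasDerivWithinAt_Ici {a : ℝ → ℝ} {H : ℝ → ℝ → ℝ}
    {F G : ℝ → ℝ} {c : ℝ} (ha : ∀ x, 0 ≤ a x) (hF : ∀ x, HasDerivAt F (G x) x)
    (hG : ∀ x, ∃ R, HasDerivWithinAt G R (Ici x) x ∧ a x * R + H (G x) x ≤ c) :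
    IsViscositySupersolution a H fun t x => t * c + F x := by
  intro t₀ x₀ ht₀ φ hφ hmin
  have hφ₀ : ContDiffAt ℝ 2 φ (t₀, x₀) :=
    hφ.contDiffAt ((isOpen_lt continuous_const continuous_fst).mem_nhds ht₀)
  have htime : deriv (fun t => φ (t, x₀)) t₀ = c := by
    have hmin_t := hmin.comp_continuous (g := fun t => (t, x₀)) (by fun_prop)
    have hφ_t : DifferentiableAt ℝ (fun t => φ (t, x₀)) t₀ :=
      (hφ₀.comp t₀ (by fun_prop)).differentiableAt two_ne_zero
    have := hmin_t.hasDerivAt_eq_zero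
      (((hasDerivAt_mul_const c).add_const (F x₀)).sub hφ_t.hasDerivAt)
    linarith
  obtain ⟨R, hR, hRc⟩ := hG x₀
  obtain ⟨hφ_x, hφ_xx⟩ := IsLocalMin.deriv_eq_and_deriv_deriv_le_of_sub (φ := fun x => φ (t₀, x))
    (fun x => (hF x).const_add (t₀ * c)) (hφ₀.comp x₀ (by fun_prop))
    (hmin.comp_continuous (g := fun x => (t₀, x)) (by fun_prop)) hR
  rw [htime, hφ_x]
  calc a x₀ * deriv (deriv fun x => φ (t₀, x)) x₀ + H (G x₀) x₀
      ≤ a x₀ * R + H (G x₀) x₀ := by gcongr; exact ha x₀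
    _ ≤ c := hRc

lemma exists_hasDerivWithinAt_Ici_of_eqOn_Iic_Icc_Ici {a : ℝ → ℝ} {H : ℝ → ℝ → ℝ} {c z₁ z₂ : ℝ}
    {f₁ g g' f₂ G : ℝ → ℝ} (hf₁ : Differentiable ℝ f₁) (hf₂ : Differentiable ℝ f₂)
    (hg : ∀ x ∈ Icc z₁ z₂, HasDerivWithinAt g (g' x) (Icc z₁ z₂) x)
    (hf₁c : ∀ x, a x * deriv f₁ x + H (f₁ x) x ≤ c) (hf₂c : ∀ x, a x * deriv f₂ x + H (f₂ x) x ≤ c)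
    (hgc : ∀ x ∈ Icc z₁ z₂, a x * g' x + H (g x) x ≤ c)
    (hG₁ : EqOn G f₁ (Iic z₁)) (hGg : EqOn G g (Icc z₁ z₂)) (hG₂ : EqOn G f₂ (Ici z₂)) (x : ℝ) :
    ∃ R, HasDerivWithinAt G R (Ici x) x ∧ a x * R + H (G x) x ≤ c := by
  rcases lt_or_ge x z₁ with hxz₁ | hz₁x
  · refine ⟨deriv f₁ x, ?_, hG₁ hxz₁.le ▸ hf₁c x⟩
    exact ((hf₁ x).hasDerivAt.congr_of_eventuallyEq
      (eventually_of_mem (Iic_mem_nhds hxz₁) hG₁)).hasDerivWithinAt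
  rcases lt_or_ge x z₂ with hxz₂ | hz₂x
  · have hx : x ∈ Icc z₁ z₂ := ⟨hz₁x, hxz₂.le⟩
    refine ⟨g' x, ?_, hGg hx ▸ hgc x hx⟩
    exact ((hg x hx).congr hGg (hGg hx)).mono_of_mem_nhdsWithin
      (Icc_mem_nhdsGE_of_mem ⟨hz₁x, hxz₂⟩)
  · refine ⟨deriv f₂ x, ?_, hG₂ hz₂x ▸ hf₂c x⟩
    exact (hf₂ x).hasDerivAt.hasDerivWithinAt.congr (fun y hy => hG₂ (hz₂x.trans hy)) (hG₂ hz₂x)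

theorem glued_supersolution_general
    (a : ℝ → ℝ) (H : ℝ → ℝ → ℝ)
    (ha_pos : ∀ x, 0 < a x)
    (lam δ : ℝ) (hδ : 0 < δ) (z₁ z₂ : ℝ) (hz : z₁ < z₂)
    (f₁ f₂ : ℝ → ℝ)
    (hb₁ : ∃ M, ∀ x, |f₁ x| ≤ M) (hb₂ : ∃ M, ∀ x, |f₂ x| ≤ M)
    (hc₁ : ContDiff ℝ 1 f₁) (hc₂ : ContDiff ℝ 1 f₂)
    (heq₁ : ∀ x, a x * deriv f₁ x + H (f₁ x) x = lam)
    (heq₂ : ∀ x, a x * deriv f₂ x + H (f₂ x) x = lam)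
    (g g' : ℝ → ℝ)
    (hg : ∀ x ∈ Icc z₁ z₂, HasDerivWithinAt g (g' x) (Icc z₁ z₂) x)
    (hgeq : ∀ x ∈ Icc z₁ z₂, a x * g' x + H (g x) x = lam + δ)
    (hgz₁ : g z₁ = f₁ z₁) (hgz₂ : g z₂ = f₂ z₂)
    (F : ℝ → ℝ)
    (hF : ∀ x, F x =
      if x ≤ z₁ then ∫ y in z₁..x, f₁ y
      else if x < z₂ then ∫ y in z₁..x, g y
      else (∫ y in z₁..z₂, g y) + ∫ y in z₂..x, f₂ y) :
    ContDiff ℝ 1 F ∧ (∃ L : NNReal, LipschitzWith L F) ∧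
    IsViscositySupersolution a H (fun t x => t * (lam + δ) + F x) := by
  obtain ⟨G, hG, hG₁, hGg, hG₂⟩ := exists_continuous_eqOn_Iic_Icc_Ici hz.le hc₁.continuous
    (fun x hx => (hg x hx).continuousWithinAt) hc₂.continuous hgz₁ hgz₂
  obtain rfl : F = fun x => ∫ y in z₁..x, G y := funext fun x =>
    (hF x).trans (intervalIntegral_eq_ite_of_eqOn_Iic_Icc_Ici hz.le hG hG₁ hGg hG₂ x).symm
  obtain ⟨C, hC⟩ := hG.exists_norm_le_of_eqOn_Iic_Ici hG₁ hG₂ hb₁ hb₂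
  refine ⟨hG.contDiff_one_primitive z₁, ⟨_, lipschitzWith_primitive hG hC z₁⟩, ?_⟩
  refine isViscositySupersolution_add_of_hasDerivWithinAt_Ici (fun x => (ha_pos x).le)
    (fun x => (hG.integral_hasStrictDerivAt z₁ x).hasDerivAt) ?_
  exact exists_hasDerivWithinAt_Ici_of_eqOn_Iic_Icc_Ici (hc₁.differentiable one_ne_zero)
    (hc₂.differentiable one_ne_zero) hg (fun x => by linarith [heq₁ x])
    (fun x => by linarith [heq₂ x]) (fun x hx => (hgeq x hx).le) hG₁ hGg hG₂

theorem glued_supersolution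
    (a : ℝ → ℝ) (H : ℝ → ℝ → ℝ)
    (ha_cont : Continuous a) (ha_pos : ∀ x, 0 < a x) (ha_le_one : ∀ x, a x ≤ 1)
    (hH_cont : Continuous fun q : ℝ × ℝ => H q.1 q.2)
    (lam δ : ℝ) (hδ : 0 < δ) (z₁ z₂ : ℝ) (hz : z₁ < z₂)
    (f₁ f₂ : ℝ → ℝ)
    (hb₁ : ∃ M, ∀ x, |f₁ x| ≤ M) (hb₂ : ∃ M, ∀ x, |f₂ x| ≤ M)
    (hc₁ : ContDiff ℝ 1 f₁) (hc₂ : ContDiff ℝ 1 f₂)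
    (heq₁ : ∀ x, a x * deriv f₁ x + H (f₁ x) x = lam)
    (heq₂ : ∀ x, a x * deriv f₂ x + H (f₂ x) x = lam)
    (g g' : ℝ → ℝ)
    (hg : ∀ x ∈ Icc z₁ z₂, HasDerivWithinAt g (g' x) (Icc z₁ z₂) x)
    (hg' : ContinuousOn g' (Icc z₁ z₂))
    (hgeq : ∀ x ∈ Icc z₁ z₂, a x * g' x + H (g x) x = lam + δ)
    (hgz₁ : g z₁ = f₁ z₁) (hgz₂ : g z₂ = f₂ z₂)
    (F : ℝ → ℝ)
    (hF : ∀ x, F x =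
      if x ≤ z₁ then ∫ y in z₁..x, f₁ y
      else if x < z₂ then ∫ y in z₁..x, g y
      else (∫ y in z₁..z₂, g y) + ∫ y in z₂..x, f₂ y) :
    ContDiff ℝ 1 F ∧ (∃ L : NNReal, LipschitzWith L F) ∧
    IsViscositySupersolution a H (fun t x => t * (lam + δ) + F x) :=
  glued_supersolution_general a H ha_pos lam δ hδ z₁ z₂ hz f₁ f₂ hb₁ hb₂ hc₁ hc₂ heq₁ heq₂ g g' hg
    hgeq hgz₁ hgz₂ F hF
end

section
/- (Perturbation of viscosity sub/supersolutions.) Let u be continuous on [0,∞) × ℝ and suppose there exists ℓ > 0 with |u(t,x) − u(t,y)| ≤ ℓ|x − y| for all t ≥ 0 and x, y ∈ ℝ. Set R = ℓ + 1, let K_R be the constant from (H3), let δ ∈ (0,1), C ∈ ℝ, and ψ(x) = (2/π)∫₀ˣ arctan(y) dy. If u is a viscosity subsolution of ∂_t u = a(x) ∂²_{xx} u + H(∂_x u, x) on (0,∞) × ℝ, then v(t,x) := u(t,x) − t(K_R + 1)δ − δψ(x) − C is also a viscosity subsolution of this equation; if u is a viscosity supersolution, then w(t,x) := u(t,x) +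 t(K_R + 1)δ + δψ(x) + C is also a viscosity supersolution of this equation. -/
open MeasureTheory Filter Set

open Real Topology

/-!
If `φ` touches `v = u - g`, with `g(t,x) = t(K+1)δ + δψ(x) + C`, from above at `(t₀,x₀)`, then
`φ + g` touches `u` from above there. As `u(t₀,·)` is `ℓ`-Lipschitz, `|∂ₓ(φ + g)| ≤ ℓ` at that
point, and as `|δψ'| ≤ δ < 1` both `∂ₓφ` and `∂ₓφ + δψ'` lie in `[-(ℓ+1), ℓ+1]`, where `H` is
`K`-Lipschitz. So replacing `φ + g` by `φ` changes the Hamiltonian by at most `Kδ` and the diffusion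
term `a δψ''` by at most `δ` (since `0 < a ≤ 1` and `ψ'' = 2/(π(1+x²)) ≤ 1`), and the drift
`(K+1)δ` of `g` in time absorbs both. Supersolutions reduce to subsolutions: `u` is a
supersolution iff `-u` is a subsolution for the Hamiltonian `(p,x) ↦ -H(-p,x)`.
-/

noncomputable def partialT (φ : ℝ × ℝ → ℝ) (t x : ℝ) : ℝ := deriv (fun s => φ (s, x)) t

noncomputable def partialX (φ : ℝ × ℝ → ℝ) (t x : ℝ) : ℝ := deriv (fun y => φ (t, y)) x

noncomputable def partialXX (φ : ℝ × ℝ → ℝ) (t x : ℝ) : ℝ := deriv (deriv fun y => φ (t, y)) x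

section Partials

variable {φ ψ : ℝ × ℝ → ℝ} {t x : ℝ}

theorem ContDiffOn.contDiff_slice_snd {n : WithTop ℕ∞} (hφ : ContDiffOn ℝ n φ {q | 0 < q.1})
    (ht : 0 < t) : ContDiff ℝ n (fun y => φ (t, y)) :=
  contDiff_iff_contDiffAt.2 fun y =>
    (hφ.contDiffAt ((isOpen_lt continuous_const continuous_fst).mem_nhds ht)).comp y
      (contDiff_const.prodMk contDiff_id).contDiffAt

theorem ContDiffOn.differentiableAt_slice_fst {n : WithTop ℕ∞}
    (hφ : ContDiffOn ℝ n φ {q | 0 < q.1}) (hn : n ≠ 0) (ht : 0 < t) :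
    DifferentiableAt ℝ (fun s => φ (s, x)) t :=
  ((hφ.contDiffAt ((isOpen_lt continuous_const continuous_fst).mem_nhds ht)).comp t
    (contDiff_id.prodMk contDiff_const).contDiffAt).differentiableAt hn

theorem partialT_add (hφ : DifferentiableAt ℝ (fun s => φ (s, x)) t)
    (hψ : DifferentiableAt ℝ (fun s => ψ (s, x)) t) :
    partialT (fun q => φ q + ψ q) t x = partialT φ t x + partialT ψ t x :=
  deriv_add hφ hψ

theorem partialX_add (hφ : DifferentiableAt ℝ (fun y => φ (t, y)) x)
    (hψ : DifferentiableAt ℝ (fun y => ψ (t, y)) x) :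
    partialX (fun q => φ q + ψ q) t x = partialX φ t x + partialX ψ t x :=
  deriv_add hφ hψ

theorem partialXX_add (hφ : ContDiff ℝ 2 (fun y => φ (t, y)))
    (hψ : ContDiff ℝ 2 (fun y => ψ (t, y))) :
    partialXX (fun q => φ q + ψ q) t x = partialXX φ t x + partialXX ψ t x := by
  have hderiv {f : ℝ → ℝ} (hf : ContDiff ℝ 2 f) : Differentiable ℝ (deriv f) :=
    ((contDiff_succ_iff_deriv (n := 1)).1 hf).2.2.differentiable one_ne_zero
  have hsum : (deriv fun y => φ (t, y) + ψ (t, y)) =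
      fun y => deriv (fun y => φ (t, y)) y + deriv (fun y => ψ (t, y)) y :=
    funext fun y => deriv_add (hφ.differentiable two_ne_zero y) (hψ.differentiable two_ne_zero y)
  exact (congrArg (deriv · x) hsum).trans (deriv_add (hderiv hφ x) (hderiv hψ x))

@[simp]
theorem partialT_neg : partialT (fun q => -φ q) t x = -partialT φ t x :=
  deriv.fun_neg

@[simp]
theorem partialX_neg : partialX (fun q => -φ q) t x = -partialX φ t x :=
  deriv.fun_neg

@[simp]
theorem partialXX_neg : partialXX (fun q => -φ q) t x = -partialXX φ t x := by
  simp only [partialXX, deriv.fun_neg', deriv.fun_neg]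

end Partials

theorem abs_deriv_le_of_isLocalMax_sub {f Φ : ℝ → ℝ} {x₀ ℓ : ℝ}
    (hf : ∀ x, |f x - f x₀| ≤ ℓ * |x - x₀|) (hmax : IsLocalMax (fun x => f x - Φ x) x₀)
    (hΦ : DifferentiableAt ℝ Φ x₀) : |deriv Φ x₀| ≤ ℓ := by
  have hlow : ∀ᶠ x in 𝓝 x₀, -(ℓ * |x - x₀|) ≤ Φ x - Φ x₀ := by
    filter_upwards [hmax] with x hx
    linarith [(abs_le.1 (hf x)).1]
  have hslope := hasDerivAt_iff_tendsto_slope.1 hΦ.hasDerivAt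
  rw [abs_le]
  constructor
  · refine ge_of_tendsto
      (hslope.mono_left (nhdsWithin_mono x₀ (s := Ioi x₀) fun x hx => ne_of_gt hx)) ?_
    filter_upwards [self_mem_nhdsWithin, eventually_nhdsWithin_of_eventually_nhds hlow]
      with x (hx : x₀ < x) hlow
    rw [abs_of_pos (sub_pos.2 hx)] at hlow
    rw [slope_def_field, le_div_iff₀ (sub_pos.2 hx)]
    linarith
  · refine le_of_tendsto
      (hslope.mono_left (nhdsWithin_mono x₀ (s := Iio x₀) fun x hx => ne_of_lt hx)) ?_
    filter_upwards [self_mem_nhdsWithin, eventually_nhdsWithin_of_eventually_nhds hlow]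
      with x (hx : x < x₀) hlow
    rw [abs_of_neg (sub_neg.2 hx)] at hlow
    rw [slope_def_field, div_le_iff_of_neg (sub_neg.2 hx)]
    linarith

theorem abs_partialX_le_of_isLocalMax_sub {u : ℝ → ℝ → ℝ} {Φ : ℝ × ℝ → ℝ} {t₀ x₀ ℓ : ℝ}
    (hlip : ∀ x, |u t₀ x - u t₀ x₀| ≤ ℓ * |x - x₀|)
    (hmax : IsLocalMax (fun q : ℝ × ℝ => u q.1 q.2 - Φ q) (t₀, x₀))
    (hΦ : DifferentiableAt ℝ (fun y => Φ (t₀, y)) x₀) : |partialX Φ t₀ x₀| ≤ ℓ :=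
  abs_deriv_le_of_isLocalMax_sub hlip (hmax.comp_continuous (by fun_prop)) hΦ

section Viscosity

variable {α : ℝ → ℝ} {h : ℝ → ℝ → ℝ} {u : ℝ → ℝ → ℝ}

theorem IsViscositySubsolution.le_of_isLocalMax_sub_add (hu : IsViscositySubsolution α h u)
    {g : ℝ × ℝ → ℝ} (hg : ContDiffOn ℝ 2 g {q | 0 < q.1}) {φ : ℝ × ℝ → ℝ}
    (hφ : ContDiffOn ℝ 2 φ {q | 0 < q.1}) {t₀ x₀ : ℝ} (ht₀ : 0 < t₀)
    (hmax : IsLocalMax (fun q : ℝ × ℝ => u q.1 q.2 - (φ q + g q)) (t₀, x₀)) :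
    partialT φ t₀ x₀ + partialT g t₀ x₀ ≤
      α x₀ * (partialXX φ t₀ x₀ + partialXX g t₀ x₀) +
        h (partialX φ t₀ x₀ + partialX g t₀ x₀) x₀ := by
  have key : partialT (fun q => φ q + g q) t₀ x₀ ≤
      α x₀ * partialXX (fun q => φ q + g q) t₀ x₀ +
        h (partialX (fun q => φ q + g q) t₀ x₀) x₀ :=
    hu t₀ x₀ ht₀ _ (hφ.add hg) hmax
  have hφx := hφ.contDiff_slice_snd ht₀
  have hgx := hg.contDiff_slice_snd ht₀
  rwa [partialT_add (hφ.differentiableAt_slice_fst two_ne_zero ht₀)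
      (hg.differentiableAt_slice_fst two_ne_zero ht₀),
    partialX_add (hφx.differentiable two_ne_zero x₀) (hgx.differentiable two_ne_zero x₀),
    partialXX_add hφx hgx] at key

theorem IsViscositySupersolution.neg (hu : IsViscositySupersolution α h u) :
    IsViscositySubsolution α (fun p x => -h (-p) x) (fun t x => -u t x) := by
  intro t₀ x₀ ht₀ φ hφ hmax
  have hmin : IsLocalMin (fun q : ℝ × ℝ => u q.1 q.2 - -φ q) (t₀, x₀) :=
    hmax.neg.congr (.of_forall fun q => by ring)
  have key := hu t₀ x₀ ht₀ _ hφ.neg hmin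
  change α x₀ * partialXX (fun q => -φ q) t₀ x₀ + h (partialX (fun q => -φ q) t₀ x₀) x₀ ≤
    partialT (fun q => -φ q) t₀ x₀ at key
  change partialT φ t₀ x₀ ≤ α x₀ * partialXX φ t₀ x₀ + -h (-partialX φ t₀ x₀) x₀
  simp only [partialT_neg, partialX_neg, partialXX_neg] at key
  linarith

theorem IsViscositySubsolution.neg (hu : IsViscositySubsolution α h u) :
    IsViscositySupersolution α (fun p x => -h (-p) x) (fun t x => -u t x) := by
  intro t₀ x₀ ht₀ φ hφ hmin
  have hmax : IsLocalMax (fun q : ℝ × ℝ => u q.1 q.2 - -φ q) (t₀, x₀) :=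
    hmin.neg.congr (.of_forall fun q => by ring)
  have key := hu t₀ x₀ ht₀ _ hφ.neg hmax
  change partialT (fun q => -φ q) t₀ x₀ ≤
    α x₀ * partialXX (fun q => -φ q) t₀ x₀ + h (partialX (fun q => -φ q) t₀ x₀) x₀ at key
  change α x₀ * partialXX φ t₀ x₀ + -h (-partialX φ t₀ x₀) x₀ ≤ partialT φ t₀ x₀
  simp only [partialT_neg, partialX_neg, partialXX_neg] at key
  linarith

end Viscosity

theorem ContDiff.integral_succ {n : ℕ} {k : ℝ → ℝ} (hk : ContDiff ℝ n k) (a : ℝ) :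
    ContDiff ℝ (n + 1) fun x => ∫ y in a..x, k y := by
  refine contDiff_succ_iff_deriv.2
    ⟨intervalIntegral.differentiable_integral_of_continuous hk.continuous, by simp, ?_⟩
  rwa [funext (hk.continuous.deriv_integral k a)]

noncomputable def arctanPotential (x : ℝ) : ℝ := 2 / π * ∫ y in (0:ℝ)..x, arctan y

theorem contDiff_arctanPotential : ContDiff ℝ 2 arctanPotential :=
  contDiff_const.mul (contDiff_arctan.integral_succ (n := 1) 0)

theorem deriv_arctanPotential : deriv arctanPotential = fun x => 2 / π * arctan x :=
  funext fun x => by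
    unfold arctanPotential
    rw [deriv_const_mul_field, continuous_arctan.deriv_integral]

theorem abs_deriv_arctanPotential_le (x : ℝ) : |deriv arctanPotential x| ≤ 1 := by
  have harctan : |arctan x| ≤ π / 2 :=
    abs_le.2 ⟨(neg_pi_div_two_lt_arctan x).le, (arctan_lt_pi_div_two x).le⟩
  rw [deriv_arctanPotential, abs_mul, abs_of_pos (by positivity : (0:ℝ) < 2 / π)]
  calc 2 / π * |arctan x| ≤ 2 / π * (π / 2) := by gcongr
    _ = 1 := by field_simp

theorem deriv_deriv_arctanPotential_le (x : ℝ) : deriv (deriv arctanPotential) x ≤ 1 := by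
  rw [deriv_arctanPotential, deriv_const_mul_field, Real.deriv_arctan]
  have hπ : 2 / π ≤ 1 := (div_le_one pi_pos).2 two_le_pi
  have hx : 1 / (1 + x ^ 2) ≤ 1 := div_le_one_of_le₀ (by nlinarith) (by positivity)
  calc 2 / π * (1 / (1 + x ^ 2)) ≤ 1 * 1 := by gcongr
    _ = 1 := one_mul 1

section Perturbation

variable {t x c : ℝ} {F : ℝ → ℝ}

theorem partialT_linear_add : partialT (fun q => q.1 * c + F q.2) t x = c := by
  simp [partialT]

theorem partialX_linear_add : partialX (fun q => q.1 * c + F q.2) t x = deriv F x := by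
  simp [partialX]

theorem partialXX_linear_add : partialXX (fun q => q.1 * c + F q.2) t x = deriv (deriv F) x := by
  simp [partialXX]

end Perturbation

theorem sub_le_of_abs_add_le {h : ℝ → ℝ → ℝ} {ℓ K δ p e x : ℝ}
    (hh : ∀ p q x, |p| ≤ ℓ + 1 → |q| ≤ ℓ + 1 → |h p x - h q x| ≤ K * |p - q|)
    (hK : 0 ≤ K) (hδ₁ : δ ≤ 1) (hpe : |p + e| ≤ ℓ) (he : |e| ≤ δ) :
    h (p + e) x - h p x ≤ K * δ := by
  have hp : |p| ≤ ℓ + 1 := by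
    have := abs_sub (p + e) e
    rw [add_sub_cancel_right] at this
    linarith
  have := hh _ _ x (hpe.trans (by linarith)) hp
  rw [add_sub_cancel_left] at this
  exact (le_abs_self _).trans (this.trans (mul_le_mul_of_nonneg_left he hK))

theorem mul_mul_le_of_le_one {a δ b : ℝ} (ha₀ : 0 ≤ a) (ha₁ : a ≤ 1) (hδ : 0 ≤ δ) (hb : b ≤ 1) :
    a * (δ * b) ≤ δ := by
  rcases le_total 0 b with hb₀ | hb₀
  · calc a * (δ * b) ≤ 1 * (δ * 1) := by gcongr
      _ = δ := by ring
  · exact (mul_nonpos_of_nonneg_of_nonpos ha₀ (mul_nonpos_of_nonneg_of_nonpos hδ hb₀)).trans hδ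

theorem IsViscositySubsolution.sub_perturbation {α : ℝ → ℝ} {h u : ℝ → ℝ → ℝ}
    (hu : IsViscositySubsolution α h u) (hα₀ : ∀ x, 0 ≤ α x) (hα₁ : ∀ x, α x ≤ 1)
    {ℓ K δ : ℝ} (hK : 0 ≤ K) (hδ₀ : 0 ≤ δ) (hδ₁ : δ ≤ 1)
    (hlip : ∀ t > 0, ∀ x y, |u t x - u t y| ≤ ℓ * |x - y|)
    (hh : ∀ p q x, |p| ≤ ℓ + 1 → |q| ≤ ℓ + 1 → |h p x - h q x| ≤ K * |p - q|)
    {f : ℝ → ℝ} (hf : ContDiff ℝ 2 f) (hf' : ∀ x, |deriv f x| ≤ 1)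
    (hf'' : ∀ x, deriv (deriv f) x ≤ 1) (C : ℝ) :
    IsViscositySubsolution α h (fun t x => u t x - t * (K + 1) * δ - δ * f x - C) := by
  intro t₀ x₀ ht₀ φ hφ hmax
  show partialT φ t₀ x₀ ≤ α x₀ * partialXX φ t₀ x₀ + h (partialX φ t₀ x₀) x₀
  set F : ℝ → ℝ := fun y => δ * f y + C
  set g : ℝ × ℝ → ℝ := fun q => q.1 * ((K + 1) * δ) + F q.2
  have hg : ContDiffOn ℝ 2 g {q | 0 < q.1} := by fun_prop
  have hmax' : IsLocalMax (fun q : ℝ × ℝ => u q.1 q.2 - (φ q + g q)) (t₀, x₀) :=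
    hmax.congr (.of_forall fun q => by simp only [g, F]; ring)
  have key := hu.le_of_isLocalMax_sub_add hg hφ ht₀ hmax'
  have hgrad := abs_partialX_le_of_isLocalMax_sub (fun x => hlip t₀ ht₀ x x₀) hmax'
    (((hφ.add hg).contDiff_slice_snd ht₀).differentiable two_ne_zero x₀)
  rw [partialX_add ((hφ.contDiff_slice_snd ht₀).differentiable two_ne_zero x₀)
    ((hg.contDiff_slice_snd ht₀).differentiable two_ne_zero x₀)] at hgrad
  have hF : deriv F = fun y => δ * deriv f y := by
    funext y; simp [F, deriv_const_mul_field]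
  simp only [g, partialT_linear_add, partialX_linear_add, partialXX_linear_add, hF,
    deriv_const_mul_field] at key hgrad
  have hshift : |δ * deriv f x₀| ≤ δ := by
    rw [abs_mul, abs_of_nonneg hδ₀]
    exact mul_le_of_le_one_right hδ₀ (hf' x₀)
  have hH := sub_le_of_abs_add_le hh hK hδ₁ hgrad hshift (x := x₀)
  have hdiffusion := mul_mul_le_of_le_one (hα₀ x₀) (hα₁ x₀) hδ₀ (hf'' x₀)
  rw [mul_add] at key
  linarith

theorem perturbed_sub_and_supersolutions_general
    (a : ℝ → ℝ) (H : ℝ → ℝ → ℝ)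
    (ha_pos : ∀ x, 0 < a x) (ha_le_one : ∀ x, a x ≤ 1)
    (u : ℝ → ℝ → ℝ)
    (ℓ : ℝ)
    (hlip : ∀ t ≥ (0:ℝ), ∀ x y : ℝ, |u t x - u t y| ≤ ℓ * |x - y|)
    (K : ℝ) (hK : 0 < K)
    (hKlip : ∀ p q x : ℝ, |p| ≤ ℓ + 1 → |q| ≤ ℓ + 1 → |H p x - H q x| ≤ K * |p - q|)
    (δ : ℝ) (hδ : δ ∈ Ioo (0:ℝ) 1) (C : ℝ)
    (ψ : ℝ → ℝ) (hψ : ∀ x, ψ x = (2 / Real.pi) * ∫ y in (0:ℝ)..x, Real.arctan y) :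
    (IsViscositySubsolution a H u →
      IsViscositySubsolution a H (fun t x => u t x - t * (K + 1) * δ - δ * ψ x - C)) ∧
    (IsViscositySupersolution a H u →
      IsViscositySupersolution a H (fun t x => u t x + t * (K + 1) * δ + δ * ψ x + C)) := by
  obtain rfl : ψ = arctanPotential := funext hψ
  have hperturb {h v} (hv : IsViscositySubsolution a h v)
      (hvlip : ∀ t > 0, ∀ x y, |v t x - v t y| ≤ ℓ * |x - y|)
      (hh : ∀ p q x, |p| ≤ ℓ + 1 → |q| ≤ ℓ + 1 → |h p x - h q x| ≤ K * |p - q|) :=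
    hv.sub_perturbation (fun x => (ha_pos x).le) ha_le_one hK.le hδ.1.le hδ.2.le hvlip hh
      contDiff_arctanPotential abs_deriv_arctanPotential_le deriv_deriv_arctanPotential_le C
  refine ⟨fun hu => hperturb hu (fun t ht => hlip t ht.le) hKlip, fun hu => ?_⟩
  have hneg := (hperturb hu.neg
    (fun t ht x y => by simpa only [neg_sub_neg, abs_sub_comm] using hlip t ht.le x y)
    (fun p q x hp hq => by
      simpa only [neg_sub_neg, abs_sub_comm] using
        hKlip (-q) (-p) x (by rwa [abs_neg]) (by rwa [abs_neg]))).neg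
  convert hneg using 1
  · simp only [neg_neg]
  · funext t x
    ring

theorem perturbed_sub_and_supersolutions
    (a : ℝ → ℝ) (H : ℝ → ℝ → ℝ)
    (ha_cont : Continuous a) (ha_pos : ∀ x, 0 < a x) (ha_le_one : ∀ x, a x ≤ 1)
    (hH_cont : Continuous fun q : ℝ × ℝ => H q.1 q.2)
    (u : ℝ → ℝ → ℝ)
    (hu_cont : ContinuousOn (fun q : ℝ × ℝ => u q.1 q.2) {q : ℝ × ℝ | 0 ≤ q.1})
    (ℓ : ℝ) (hℓ : 0 < ℓ)
    (hlip : ∀ t ≥ (0:ℝ), ∀ x y : ℝ, |u t x - u t y| ≤ ℓ * |x - y|)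
    (K : ℝ) (hK : 0 < K)
    (hKlip : ∀ p q x : ℝ, |p| ≤ ℓ + 1 → |q| ≤ ℓ + 1 → |H p x - H q x| ≤ K * |p - q|)
    (δ : ℝ) (hδ : δ ∈ Ioo (0:ℝ) 1) (C : ℝ)
    (ψ : ℝ → ℝ) (hψ : ∀ x, ψ x = (2 / Real.pi) * ∫ y in (0:ℝ)..x, Real.arctan y) :
    (IsViscositySubsolution a H u →
      IsViscositySubsolution a H (fun t x => u t x - t * (K + 1) * δ - δ * ψ x - C)) ∧
    (IsViscositySupersolution a H u →
      IsViscositySupersolution a H (fun t x => u t x + t * (K + 1) * δ + δ * ψ x + C)) :=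
  perturbed_sub_and_supersolutions_general a H ha_pos ha_le_one u ℓ hlip K hK hKlip δ hδ C ψ hψ
end

section
/- Let λ ∈ ℝ, ε > 0 and R̃ ≥ 0 be such that G_U(p) ≤ λ − ε for all p ∈ [−R̃, R̃]. Suppose f : ℝ → ℝ is bounded, C¹, and satisfies a(x)f′(x) + H(f(x),x) = λ for all x ∈ ℝ. Then for every x₀ ∈ ℝ with |f(x₀)| ≤ R̃, one has f(x) > R̃ for all x > x₀ + 2R̃/ε + 1; in particular, the set {x ∈ ℝ : |f(x)| ≤ R̃} is bounded above whenever it is nonempty. -/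
/-!
Where `|f| ≤ R̃`, the equation and the gap give `ε ≤ a f' ≤ f'`, so `f` crosses the levels `±R̃`
only upwards and can never return below them. Hence, once `|f(x₀)| ≤ R̃`, the function stays
above `-R̃`; if it also stayed below `R̃` on `[x₀, x₀ + T]` it would rise there by at least
`εT > 2R̃`, which is impossible.
-/

open Set Filter Topology

lemma HasDerivAt.eventually_nhdsGT_lt {f : ℝ → ℝ} {f' x : ℝ} (hf : HasDerivAt f f' x)
    (hf' : 0 < f') : ∀ᶠ y in 𝓝[>] x, f x < f y := by
  have hslope := (hasDerivWithinAt_iff_tendsto_slope' self_notMem_Ioi).1 hf.hasDerivWithinAt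
  filter_upwards [hslope.eventually (lt_mem_nhds hf'), self_mem_nhdsWithin] with y hy hxy
  rw [slope_def_field] at hy
  exact sub_pos.1 ((div_pos_iff_of_pos_right (sub_pos.2 hxy)).1 hy)

theorem le_of_le_of_hasDerivAt_pos_of_eq {f f' : ℝ → ℝ} {c a b : ℝ}
    (hf : ∀ x, HasDerivAt f (f' x) x) (hpos : ∀ x, f x = c → 0 < f' x)
    (hab : a ≤ b) (ha : c ≤ f a) : c ≤ f b := by
  have hcont : Continuous f := continuous_iff_continuousAt.2 fun x => (hf x).continuousAt
  have hsub : Icc a b ⊆ {x | c ≤ f x} := by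
    refine IsClosed.Icc_subset_of_forall_mem_nhdsWithin
      ((isClosed_le continuous_const hcont).inter isClosed_Icc) ha ?_
    rintro x ⟨hx, -⟩
    rcases (show c ≤ f x from hx).eq_or_lt with hlevel | habove
    · filter_upwards [(hf x).eventually_nhdsGT_lt (hpos x hlevel.symm)] with y hy
      exact hlevel.le.trans hy.le
    · refine mem_nhdsWithin_of_mem_nhds (mem_of_superset
        ((isOpen_lt continuous_const hcont).mem_nhds habove) fun y (hy : c < f y) => hy.le)
  exact hsub ⟨hab, le_rfl⟩

/-- This is `le_of_le_of_hasDerivAt_pos_of_eq` for the reflection `t ↦ -f (a + b - t)` at level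
`-c`. -/
theorem lt_of_lt_of_hasDerivAt_pos_of_eq {f f' : ℝ → ℝ} {c a b : ℝ}
    (hf : ∀ x, HasDerivAt f (f' x) x) (hpos : ∀ x, f x = c → 0 < f' x)
    (hab : a ≤ b) (ha : c < f a) : c < f b := by
  have hg : ∀ t, HasDerivAt (fun t => -f (a + b - t)) (f' (a + b - t)) t := fun t =>
    ((hf (a + b - t)).comp_const_sub (a + b) t).neg.congr_deriv (neg_neg _)
  have hgpos : ∀ t, -f (a + b - t) = -c → 0 < f' (a + b - t) := fun t ht =>
    hpos _ (neg_inj.1 ht)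
  by_contra! hb
  have := le_of_le_of_hasDerivAt_pos_of_eq hg hgpos hab (by simpa using hb)
  simp only [add_sub_cancel_right, neg_le_neg_iff] at this
  exact this.not_gt ha

theorem lt_of_abs_le_of_hasDerivAt_ge {f f' : ℝ → ℝ} {R ε T x₀ x : ℝ}
    (hf : ∀ x, HasDerivAt f (f' x) x) (hε : 0 < ε) (hder : ∀ x, |f x| ≤ R → ε ≤ f' x)
    (hT : 2 * R < ε * T) (hx₀ : |f x₀| ≤ R) (hx : x₀ + T ≤ x) : R < f x := by
  have hR : 0 ≤ R := (abs_nonneg _).trans hx₀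
  have hpos : ∀ c, |c| ≤ R → ∀ y, f y = c → 0 < f' y := fun c hc y hy =>
    hε.trans_le (hder y (hy ▸ hc))
  have hposR := hpos R (abs_of_nonneg hR).le
  have hposNegR := hpos (-R) (by rw [abs_neg, abs_of_nonneg hR])
  have hT0 : 0 < T := pos_of_mul_pos_right (by linarith) hε.le
  suffices R < f (x₀ + T) from lt_of_lt_of_hasDerivAt_pos_of_eq hf hposR hx this
  by_contra! hle
  have hlow : ∀ y ∈ Icc x₀ (x₀ + T), |f y| ≤ R := fun y hy => abs_le.2
    ⟨le_of_le_of_hasDerivAt_pos_of_eq hf hposNegR hy.1 (abs_le.1 hx₀).1,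
      not_lt.1 fun h => hle.not_gt (lt_of_lt_of_hasDerivAt_pos_of_eq hf hposR hy.2 h)⟩
  obtain ⟨c, hc, hslope⟩ := exists_hasDerivAt_eq_slope f f' (by linarith : x₀ < x₀ + T)
    (fun y _ => (hf y).continuousAt.continuousWithinAt) (fun y _ => hf y)
  have hεc := hder c (hlow c (Ioo_subset_Icc_self hc))
  rw [hslope, add_sub_cancel_left, le_div_iff₀ hT0] at hεc
  linarith [(abs_le.1 hx₀).1]

theorem solution_escapes_low_region_general
    (a : ℝ → ℝ) (H : ℝ → ℝ → ℝ)
    (ha_pos : ∀ x, 0 < a x) (ha_le_one : ∀ x, a x ≤ 1)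
    (G_U : ℝ → ℝ)
    (hHU : ∀ p x, H p x ≤ G_U p)
    (lam ε Rt : ℝ) (hε : 0 < ε)
    (hgap : ∀ p : ℝ, |p| ≤ Rt → G_U p ≤ lam - ε)
    (f : ℝ → ℝ) (hf : ContDiff ℝ 1 f)
    (heq : ∀ x, a x * deriv f x + H (f x) x = lam) :
    (∀ x₀ : ℝ, |f x₀| ≤ Rt → ∀ x : ℝ, x₀ + 2 * Rt / ε + 1 < x → Rt < f x) ∧
    ({x : ℝ | |f x| ≤ Rt}.Nonempty → BddAbove {x : ℝ | |f x| ≤ Rt}) := by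
  have hdiff : Differentiable ℝ f := hf.differentiable one_ne_zero
  have hder : ∀ x, |f x| ≤ Rt → ε ≤ deriv f x := fun x hx => by
    have : ε ≤ a x * deriv f x := by linarith [heq x, hHU (f x) x, hgap (f x) hx]
    nlinarith [ha_pos x, ha_le_one x]
  have escape : ∀ x₀, |f x₀| ≤ Rt → ∀ x, x₀ + 2 * Rt / ε + 1 < x → Rt < f x :=
    fun x₀ h₀ x hx => lt_of_abs_le_of_hasDerivAt_ge (T := 2 * Rt / ε + 1)
      (fun y => (hdiff y).hasDerivAt) hε hder
      (by rw [mul_add, mul_div_cancel₀ _ hε.ne']; linarith) h₀ (by linarith)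
  refine ⟨escape, ?_⟩
  rintro ⟨x₀, hx₀⟩
  exact ⟨x₀ + 2 * Rt / ε + 1, fun y hy =>
    not_lt.1 fun h => (abs_le.1 hy).2.not_gt (escape x₀ hx₀ y h)⟩

theorem solution_escapes_low_region
    (a : ℝ → ℝ) (H : ℝ → ℝ → ℝ)
    (ha_cont : Continuous a) (ha_pos : ∀ x, 0 < a x) (ha_le_one : ∀ x, a x ≤ 1)
    (hH_cont : Continuous fun q : ℝ × ℝ => H q.1 q.2)
    (G_U : ℝ → ℝ) (hGU_cont : Continuous G_U) (hGU_even : ∀ p, G_U (-p) = G_U p)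
    (hGU_mono : MonotoneOn G_U (Ici 0)) (hGU_coercive : Tendsto G_U atTop atTop)
    (hHU : ∀ p x, H p x ≤ G_U p)
    (lam ε Rt : ℝ) (hε : 0 < ε) (hRt : 0 ≤ Rt)
    (hgap : ∀ p : ℝ, |p| ≤ Rt → G_U p ≤ lam - ε)
    (f : ℝ → ℝ) (hb : ∃ M, ∀ x, |f x| ≤ M) (hf : ContDiff ℝ 1 f)
    (heq : ∀ x, a x * deriv f x + H (f x) x = lam) :
    (∀ x₀ : ℝ, |f x₀| ≤ Rt → ∀ x : ℝ, x₀ + 2 * Rt / ε + 1 < x → Rt < f x) ∧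
    ({x : ℝ | |f x| ≤ Rt}.Nonempty → BddAbove {x : ℝ | |f x| ≤ Rt}) :=
  solution_escapes_low_region_general a H ha_pos ha_le_one G_U hHU lam ε Rt hε hgap f hf heq
end
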